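/- arXiv:2103.12925 — 2 statements merged into one kernel-verified Lean document; each statement's English description precedes it below -/
import Mathlib

section
/- Let B be a Boolean algebra and H a proper filter on B, with p ≤_H q defined by ∃h ∈ H, p ⊓ qᶜ ⊓ h = ⊥, and p ≈_H q iff p ≤_H q and q ≤_H p. Say p ∥ H if p ⊓ h ≠ ⊥ for all h ∈ H. Then for p, p' ∈ B with p ∥ H and p' ∥ H, the equivalence classes [p]_H and [p']_H are compatible in the quotient order (i.e., there exists r with r ∥ H, r ≤_H p and r ≤_H p') if and only if (p ⊓ p') ∥ H. -/
/-!
Read `r ⊓ qᶜ ⊓ h = ⊥` as `r ⊓ h ≤ q`: then `r ≤_H q` says that `r` lies below `q` on some element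
of `H`. Since `H` is closed under meets, `≤_H` is closed under meets in its right argument, and
compatibility with `H` propagates upwards along `≤_H`. So a common `≤_H`-lower bound `r ∥ H` of
`p` and `p'` forces `p ⊓ p' ∥ H`, and conversely `p ⊓ p'` is itself such a lower bound.
-/

namespace QuotientForcing

variable {B : Type*} [BooleanAlgebra B]

/-- `p ∥ H`. -/
def CompatibleWith (H : Set B) (p : B) : Prop :=
  ∀ h ∈ H, p ⊓ h ≠ ⊥

/-- `r ≤_H q`. -/
def LEMod (H : Set B) (r q : B) : Prop :=
  ∃ h ∈ H, r ⊓ qᶜ ⊓ h = ⊥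

theorem inf_compl_inf_eq_bot_iff {r q h : B} : r ⊓ qᶜ ⊓ h = ⊥ ↔ r ⊓ h ≤ q := by
  rw [inf_right_comm, ← disjoint_iff, disjoint_compl_right_iff]

theorem leMod_iff {H : Set B} {r q : B} : LEMod H r q ↔ ∃ h ∈ H, r ⊓ h ≤ q := by
  simp only [LEMod, inf_compl_inf_eq_bot_iff]

theorem leMod_of_le {H : Set B} (hne : H.Nonempty) {r q : B} (hrq : r ≤ q) : LEMod H r q :=
  let ⟨h, hh⟩ := hne
  leMod_iff.2 ⟨h, hh, inf_le_left.trans hrq⟩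

theorem LEMod.inf {H : Set B} (hmeet : ∀ p ∈ H, ∀ q ∈ H, p ⊓ q ∈ H) {r q q' : B}
    (hq : LEMod H r q) (hq' : LEMod H r q') : LEMod H r (q ⊓ q') := by
  obtain ⟨h, hh, hrh⟩ := leMod_iff.1 hq
  obtain ⟨h', hh', hrh'⟩ := leMod_iff.1 hq'
  refine leMod_iff.2 ⟨h ⊓ h', hmeet h hh h' hh', le_inf ?_ ?_⟩
  · exact (inf_le_inf_left r inf_le_left).trans hrh
  · exact (inf_le_inf_left r inf_le_right).trans hrh'

theorem CompatibleWith.of_leMod {H : Set B} (hmeet : ∀ p ∈ H, ∀ q ∈ H, p ⊓ q ∈ H) {r q : B}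
    (hr : CompatibleWith H r) (hrq : LEMod H r q) : CompatibleWith H q := by
  obtain ⟨h', hh', hrh'⟩ := leMod_iff.1 hrq
  intro h hh hqh
  have hbot : r ⊓ (h ⊓ h') ≤ q ⊓ h :=
    le_inf ((inf_le_inf_left r inf_le_right).trans hrh') (inf_le_right.trans inf_le_left)
  exact hr _ (hmeet h hh h' hh') (le_bot_iff.1 (hqh ▸ hbot))

end QuotientForcing

theorem quotient_compatible_iff_general {B : Type*} [BooleanAlgebra B]
    (H : Set B)
    (hne : H.Nonempty)
    (hmeet : ∀ p ∈ H, ∀ q ∈ H, p ⊓ q ∈ H)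
    (p p' : B) :
    (∃ r : B, (∀ h ∈ H, r ⊓ h ≠ ⊥) ∧
        (∃ h ∈ H, r ⊓ pᶜ ⊓ h = ⊥) ∧ (∃ h ∈ H, r ⊓ p'ᶜ ⊓ h = ⊥)) ↔
      (∀ h ∈ H, (p ⊓ p') ⊓ h ≠ ⊥) := by
  constructor
  · rintro ⟨r, hr, hrp, hrp'⟩
    exact QuotientForcing.CompatibleWith.of_leMod hmeet hr (.inf hmeet hrp hrp')
  · intro hpp'
    exact ⟨p ⊓ p', hpp', QuotientForcing.leMod_of_le hne inf_le_left,
      QuotientForcing.leMod_of_le hne inf_le_right⟩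

/-- In the quotient forcing B/H: for p, p' compatible with H, the classes
[p]_H and [p']_H are compatible iff p ⊓ p' is compatible with H. -/
theorem quotient_compatible_iff {B : Type*} [BooleanAlgebra B]
    (H : Set B)
    (hne : H.Nonempty)
    (hup : ∀ p ∈ H, ∀ q : B, p ≤ q → q ∈ H)
    (hmeet : ∀ p ∈ H, ∀ q ∈ H, p ⊓ q ∈ H)
    (hproper : (⊥ : B) ∉ H)
    (p p' : B)
    (hp : ∀ h ∈ H, p ⊓ h ≠ ⊥)
    (hp' : ∀ h ∈ H, p' ⊓ h ≠ ⊥) :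
    (∃ r : B, (∀ h ∈ H, r ⊓ h ≠ ⊥) ∧
        (∃ h ∈ H, r ⊓ pᶜ ⊓ h = ⊥) ∧ (∃ h ∈ H, r ⊓ p'ᶜ ⊓ h = ⊥)) ↔
      (∀ h ∈ H, (p ⊓ p') ⊓ h ≠ ⊥) :=
  quotient_compatible_iff_general H hne hmeet p p'
end

section
/- Any two countable atomless Boolean algebras are isomorphic. -/
/-!
Back and forth over finite partial isomorphisms. A finite set `s` of pairs `(b, c)` is a partial
isomorphism when, for every sign pattern, the signed meet of the first coordinates vanishes
exactly when that of the second coordinates does. To add a new `b`, split every cell `w` of `s`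
into `w ⊓ b` and `w ⊓ bᶜ`; atomlessness of `C` gives a matching split of the `C`-side of `w`,
and since the cells are finitely many and pairwise disjoint these splits glue to one partner `c`.
A generic ideal (Rasiowa–Sikorski) for the countably many resulting cofinal sets is then the
graph of an order isomorphism.
-/

theorem nonempty_orderIso_of_forall_le_iff {α β : Type*} [PartialOrder α] [PartialOrder β]
    (R : α → β → Prop) (hα : ∀ a, ∃ b, R a b) (hβ : ∀ b, ∃ a, R a b)
    (hR : ∀ ⦃a b a' b'⦄, R a b → R a' b' → (a ≤ a' ↔ b ≤ b')) : Nonempty (α ≃o β) := by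
  choose f hf using hα
  choose g hg using hβ
  exact ⟨{ toFun := f
           invFun := g
           left_inv a := le_antisymm ((hR (hg _) (hf a)).2 le_rfl) ((hR (hf a) (hg _)).2 le_rfl)
           right_inv b := le_antisymm ((hR (hf _) (hg b)).1 le_rfl) ((hR (hg b) (hf _)).1 le_rfl)
           map_rel_iff' := (hR (hf _) (hf _)).symm }⟩

theorem Set.PairwiseDisjoint.inf_finset_sup_inf {X ι : Type*} [DistribLattice X] [OrderBot X]
    {t : Finset ι} {f : ι → X} (ht : (t : Set ι).PairwiseDisjoint f) (g : ι → X) {i : ι}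
    (hi : i ∈ t) : f i ⊓ t.sup (fun j => f j ⊓ g j) = f i ⊓ g i := by
  rw [Finset.sup_inf_distrib_left]
  refine le_antisymm (Finset.sup_le fun j hj => ?_)
    (Finset.le_sup_of_le hi (le_inf inf_le_left le_rfl))
  obtain rfl | hij := eq_or_ne i j
  · rw [← inf_assoc, inf_idem]
  · rw [← inf_assoc, (ht hi hj hij).eq_bot, bot_inf_eq]
    exact bot_le

namespace BackAndForth

open Finset

section Cell

variable {X : Type*} [BooleanAlgebra X]

def cell (s : Finset X) (ε : X → Bool) : X :=
  s.inf fun x => cond (ε x) x xᶜ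

theorem cell_congr {s : Finset X} {ε ε' : X → Bool} (h : ∀ x ∈ s, ε x = ε' x) :
    cell s ε = cell s ε' :=
  inf_congr rfl fun x hx => by rw [h x hx]

theorem cell_insert [DecidableEq X] (x : X) (s : Finset X) (ε : X → Bool) :
    cell (insert x s) ε = cond (ε x) x xᶜ ⊓ cell s ε :=
  inf_insert

theorem cell_le {s : Finset X} {ε : X → Bool} {x : X} (hx : x ∈ s) (h : ε x = true) :
    cell s ε ≤ x := by
  simpa [cell, h] using inf_le (f := fun x => cond (ε x) x xᶜ) hx

theorem cell_le_compl {s : Finset X} {ε : X → Bool} {x : X} (hx : x ∈ s) (h : ε x = false) :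
    cell s ε ≤ xᶜ := by
  simpa [cell, h] using inf_le (f := fun x => cond (ε x) x xᶜ) hx

theorem disjoint_cell {s : Finset X} {ε ε' : X → Bool} {x : X} (hx : x ∈ s) (h : ε x ≠ ε' x) :
    Disjoint (cell s ε) (cell s ε') := by
  cases hε : ε x
  · exact disjoint_compl_left.mono (cell_le_compl hx hε) (cell_le hx (by simpa [hε] using h.symm))
  · exact disjoint_compl_right.mono (cell_le hx hε) (cell_le_compl hx (by simpa [hε] using h.symm))

theorem pairwiseDisjoint_range_cell (s : Finset X) : (Set.range (cell s)).PairwiseDisjoint id := by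
  rintro _ ⟨ε, rfl⟩ _ ⟨ε', rfl⟩ hne
  obtain ⟨x, hx, h⟩ : ∃ x ∈ s, ε x ≠ ε' x := by
    by_contra! h
    exact hne (cell_congr h)
  exact disjoint_cell hx h

theorem finite_range_cell (s : Finset X) : (Set.range (cell s)).Finite := by
  classical
  refine (Set.finite_range fun η : s → Bool =>
    cell s fun x => if h : x ∈ s then η ⟨x, h⟩ else false).subset ?_
  rintro _ ⟨ε, rfl⟩
  exact ⟨fun x => ε x, cell_congr fun x hx => by simp [hx]⟩

theorem eq_bot_of_forall_disjoint_cell (s : Finset X) {a : X}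
    (h : ∀ ε, Disjoint (cell s ε) a) : a = ⊥ := by
  classical
  induction s using Finset.induction_on generalizing a with
  | empty => simpa [cell] using h fun _ => true
  | insert x s hx ih =>
    have key : ∀ e, a ⊓ cond e x xᶜ = ⊥ := fun e => ih fun ε => by
      have := h (Function.update ε x e)
      rw [cell_insert, Function.update_self,
        cell_congr fun y hy => Function.update_of_ne (ne_of_mem_of_not_mem hy hx) _ _] at this
      rw [disjoint_iff, ← this.eq_bot]
      ac_rfl
    calc a = a ⊓ cond true x xᶜ ⊔ a ⊓ cond false x xᶜ := by simp [← inf_sup_left]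
      _ = ⊥ := by rw [key, key, sup_bot_eq]

end Cell

variable {B C : Type*} [BooleanAlgebra B] [BooleanAlgebra C]

def IsBalanced (w : B × C) : Prop :=
  w.1 = ⊥ ↔ w.2 = ⊥

theorem IsBalanced.exists_isBalanced_inf_and_inf_compl
    (hC : ∀ c : C, c ≠ ⊥ → ∃ y, ⊥ < y ∧ y < c) {w : B × C} (hw : IsBalanced w) (b : B) :
    ∃ c, IsBalanced (w ⊓ (b, c)) ∧ IsBalanced (w ⊓ (b, c)ᶜ) := by
  obtain ⟨u, v⟩ := w
  by_cases hb : u ⊓ b = ⊥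
  · refine ⟨⊥, by simp [IsBalanced, hb], ?_⟩
    have : u ⊓ bᶜ = u := inf_eq_left.2 (le_compl_iff_disjoint_right.2 (disjoint_iff.2 hb))
    simpa [IsBalanced, this] using hw
  by_cases hb' : u ⊓ bᶜ = ⊥
  · refine ⟨⊤, ?_, by simp [IsBalanced, hb']⟩
    have : u ⊓ b = u := inf_eq_left.2 (disjoint_compl_right_iff.1 (disjoint_iff.2 hb'))
    simpa [IsBalanced, this] using hw
  have hv : v ≠ ⊥ := fun hv => hb (by rw [show u = ⊥ from hw.2 hv, bot_inf_eq])
  obtain ⟨c, hc, hcv⟩ := hC v hv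
  refine ⟨c, ?_, ?_⟩
  · simp [IsBalanced, hb, inf_eq_right.2 hcv.le, hc.ne']
  · have hub : ¬u ≤ b := fun h => hb' (disjoint_iff.1 (disjoint_compl_right_iff.2 h))
    simp [IsBalanced, ← sdiff_eq, sdiff_eq_bot_iff, hcv.not_ge, hub]

/-- The nonzero cells of `s` are the pairs of atoms of the finite subalgebras generated by the two
coordinates, so this says that `s` extends to an isomorphism between these subalgebras. -/
def IsPartialIso (s : Finset (B × C)) : Prop :=
  ∀ ε, IsBalanced (cell s ε)

theorem isPartialIso_empty [Nontrivial B] [Nontrivial C] : IsPartialIso (∅ : Finset (B × C)) :=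
  fun _ => by simp [IsBalanced, cell]

theorem cell_image_swap [DecidableEq (C × B)] (s : Finset (B × C)) (ε : C × B → Bool) :
    cell (s.image Prod.swap) ε = (cell s (ε ∘ Prod.swap)).swap := by
  rw [cell, inf_image, cell, Finset.apply_inf_eq_inf_comp Prod.swap (fun _ _ => rfl) rfl]
  congr 1
  funext x
  simp only [Function.comp_apply]
  cases ε x.swap <;> rfl

theorem IsPartialIso.image_swap [DecidableEq (C × B)] {s : Finset (B × C)}
    (hs : IsPartialIso s) : IsPartialIso (s.image Prod.swap) := fun ε => by
  rw [IsBalanced, cell_image_swap]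
  exact (hs _).symm

theorem IsPartialIso.le_of_le {s : Finset (B × C)} (hs : IsPartialIso s) {b b' : B} {c c' : C}
    (h : (b, c) ∈ s) (h' : (b', c') ∈ s) (hb : b ≤ b') : c ≤ c' := by
  have : (b, c) ⊓ (b', c')ᶜ = ⊥ := eq_bot_of_forall_disjoint_cell s fun ε => by
    cases hε : ε (b, c)
    · exact disjoint_compl_left.mono (cell_le_compl h hε) inf_le_left
    cases hε' : ε (b', c')
    · have h1 : (cell s ε).1 = ⊥ := le_bot_iff.1 <|
        (le_inf (cell_le h hε) (cell_le_compl h' hε')).1.trans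
          (disjoint_compl_right_iff.2 hb).le_bot
      rw [show cell s ε = ⊥ from Prod.ext h1 ((hs ε).1 h1)]
      exact disjoint_bot_left
    · exact disjoint_compl_right.mono (cell_le h' hε') inf_le_right
  exact disjoint_compl_right_iff.1 (disjoint_iff.2 (congrArg Prod.snd this))

theorem IsPartialIso.le_iff {s : Finset (B × C)} (hs : IsPartialIso s) {b b' : B} {c c' : C}
    (h : (b, c) ∈ s) (h' : (b', c') ∈ s) : b ≤ b' ↔ c ≤ c' := by
  classical
  exact ⟨hs.le_of_le h h', hs.image_swap.le_of_le (mem_image_of_mem _ h) (mem_image_of_mem _ h')⟩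

theorem IsPartialIso.exists_insert [DecidableEq (B × C)]
    (hC : ∀ c : C, c ≠ ⊥ → ∃ y, ⊥ < y ∧ y < c) {s : Finset (B × C)} (hs : IsPartialIso s)
    (b : B) : ∃ c, IsPartialIso (insert (b, c) s) := by
  have : ∀ w : B × C, ∃ c, IsBalanced w →
      IsBalanced (w ⊓ (b, c)) ∧ IsBalanced (w ⊓ (b, c)ᶜ) := fun w => by
    by_cases hw : IsBalanced w
    · exact (hw.exists_isBalanced_inf_and_inf_compl hC b).imp fun _ h _ => h
    · exact ⟨⊥, fun h => absurd h hw⟩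
  choose c' hc' using this
  set T := (finite_range_cell s).toFinset
  have hT : (T : Set (B × C)).PairwiseDisjoint Prod.snd := by
    rw [Set.Finite.coe_toFinset]
    exact fun w hw w' hw' hne => (Prod.disjoint_iff.1 (pairwiseDisjoint_range_cell s hw hw' hne)).2
  refine ⟨T.sup fun w => w.2 ⊓ c' w, fun ε => ?_⟩
  set w := cell s ε
  have hglue : w ⊓ (b, T.sup fun w => w.2 ⊓ c' w) = w ⊓ (b, c' w) :=
    Prod.ext rfl (hT.inf_finset_sup_inf c' (by simp [T, w]))
  have hglue' : w ⊓ (b, T.sup fun w => w.2 ⊓ c' w)ᶜ = w ⊓ (b, c' w)ᶜ := by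
    rw [← sdiff_eq, ← sdiff_eq, sdiff_eq_sdiff_iff_inf_eq_inf, hglue]
  rw [cell_insert, inf_comm]
  cases ε (b, _)
  · rw [cond_false, hglue']
    exact (hc' w (hs ε)).2
  · rw [cond_true, hglue]
    exact (hc' w (hs ε)).1

variable (B C) in
abbrev PartialIso : Type _ := {s : Finset (B × C) // IsPartialIso s}

def definedAtLeft (hC : ∀ c : C, c ≠ ⊥ → ∃ y, ⊥ < y ∧ y < c) (b : B) :
    Order.Cofinal (PartialIso B C) where
  carrier := {s | ∃ c, (b, c) ∈ s.1}
  isCofinal s := by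
    classical
    obtain ⟨c, hc⟩ := s.2.exists_insert hC b
    exact ⟨⟨_, hc⟩, ⟨c, mem_insert_self _ _⟩, subset_insert _ _⟩

def definedAtRight (hB : ∀ b : B, b ≠ ⊥ → ∃ y, ⊥ < y ∧ y < b) (c : C) :
    Order.Cofinal (PartialIso B C) where
  carrier := {s | ∃ b, (b, c) ∈ s.1}
  isCofinal s := by
    classical
    obtain ⟨b, hb⟩ := s.2.image_swap.exists_insert hB c
    exact ⟨⟨_, by simpa [image_insert, image_image] using hb.image_swap⟩,
      ⟨b, mem_insert_self _ _⟩, subset_insert _ _⟩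

end BackAndForth

open BackAndForth

/-- Any two countable atomless (nontrivial) Boolean algebras are isomorphic. -/
theorem countable_atomless_boolean_algebras_isomorphic
    {B C : Type} [BooleanAlgebra B] [BooleanAlgebra C]
    [Countable B] [Countable C] [Nontrivial B] [Nontrivial C]
    (hB : ∀ b : B, b ≠ ⊥ → ∃ c : B, ⊥ < c ∧ c < b)
    (hC : ∀ b : C, b ≠ ⊥ → ∃ c : C, ⊥ < c ∧ c < b) :
    Nonempty (B ≃o C) := by
  cases nonempty_encodable B
  cases nonempty_encodable C
  let 𝒟 := Sum.elim (definedAtLeft hC) (definedAtRight hB)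
  let I := Order.idealOfCofinals (⟨∅, isPartialIso_empty⟩ : PartialIso B C) 𝒟
  refine nonempty_orderIso_of_forall_le_iff (fun b c => ∃ s ∈ I, (b, c) ∈ s.1)
    (fun b => ?_) (fun c => ?_) ?_
  · obtain ⟨s, ⟨c, hc⟩, hs⟩ := Order.cofinal_meets_idealOfCofinals _ 𝒟 (Sum.inl b)
    exact ⟨c, s, hs, hc⟩
  · obtain ⟨s, ⟨b, hb⟩, hs⟩ := Order.cofinal_meets_idealOfCofinals _ 𝒟 (Sum.inr c)
    exact ⟨b, s, hs, hb⟩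
  · rintro b c b' c' ⟨s, hs, h⟩ ⟨s', hs', h'⟩
    obtain ⟨t, -, hst, hs't⟩ := I.directed _ hs _ hs'
    exact t.2.le_iff (hst h) (hs't h')
end
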